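/- If a map g from an infinite-dimensional Banach space X to itself is compact (continuous and mapping bounded sets to relatively compact sets), then g is not surjective. -/

import Mathlib

/-!
If `g` were onto, `X = ⋃ₙ closure (g '' closedBall 0 n)` would be σ-compact; by Baire one of these
compact sets has interior, so `X` is locally compact, hence finite-dimensional by Riesz.
-/

open Set Function Bornology

theorem IsTopologicalAddGroup.locallyCompactSpace_of_sigmaCompact_of_baire (G : Type*)
    [TopologicalSpace G] [AddGroup G] [IsTopologicalAddGroup G] [T2Space G]
    [SigmaCompactSpace G] [BaireSpace G] : LocallyCompactSpace G := by
  obtain ⟨n, x, hx⟩ := nonempty_interior_of_iUnion_of_closed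
    (fun n ↦ (isCompact_compactCovering G n).isClosed) (iUnion_compactCovering G)
  exact (isCompact_compactCovering G n).locallyCompactSpace_of_mem_nhds_of_addGroup
    (mem_interior_iff_mem_nhds.mp hx)

theorem SigmaCompactSpace.of_surjective_of_isCompact_closure_image {X Y : Type*}
    [PseudoMetricSpace X] [TopologicalSpace Y] {g : X → Y} (hg : Surjective g)
    (hcomp : ∀ s : Set X, IsBounded s → IsCompact (closure (g '' s))) : SigmaCompactSpace Y := by
  rcases isEmpty_or_nonempty X with _ | ⟨⟨x₀⟩⟩
  · have : IsEmpty Y := hg.isEmpty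
    infer_instance
  refine ⟨⟨fun n ↦ closure (g '' Metric.closedBall x₀ n),
    fun n ↦ hcomp _ Metric.isBounded_closedBall, ?_⟩⟩
  refine eq_univ_of_subset (iUnion_mono fun n ↦ subset_closure) ?_
  rw [← image_iUnion, Metric.iUnion_closedBall_nat, image_univ, hg.range_eq]

theorem stmt_0_general (X : Type*) [NormedAddCommGroup X] [NormedSpace ℝ X] [CompleteSpace X]
    (hinf : ¬ FiniteDimensional ℝ X) (g : X → X)
    (hcomp : ∀ s : Set X, Bornology.IsBounded s → IsCompact (closure (g '' s))) :
    ¬ Function.Surjective g := by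
  intro hg
  have := SigmaCompactSpace.of_surjective_of_isCompact_closure_image hg hcomp
  have := IsTopologicalAddGroup.locallyCompactSpace_of_sigmaCompact_of_baire X
  exact hinf (.of_locallyCompactSpace ℝ)

/-- A compact (continuous, mapping bounded sets to relatively compact sets) map
from an infinite-dimensional Banach space to itself is not surjective. -/
theorem stmt_0 (X : Type*) [NormedAddCommGroup X] [NormedSpace ℝ X] [CompleteSpace X]
    (hinf : ¬ FiniteDimensional ℝ X) (g : X → X) (hg : Continuous g)
    (hcomp : ∀ s : Set X, Bornology.IsBounded s → IsCompact (closure (g '' s))) :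
    ¬ Function.Surjective g :=
  stmt_0_general X hinf g hcomp
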